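/- Let I ⊆ {1,…,n} and let J := {1,…,n} ∖ I be its complement; assume both |I| and |J| are even. For α, β ∈ ℂ set c := α·Γ_I + β·Γ_J and d := −c. Then for every μ ∈ {1,…,n}: if μ ∈ I then q_{c,d}(Γ_μ) = 4·σ_J·β²·Γ_μ, and if μ ∈ J then q_{c,d}(Γ_μ) = 4·σ_I·α²·Γ_μ. (Eigenvalue formula for pseudo-monomial quadratic Clifford pairs of even type with opposite signs, i.e. the pairs (c, −c) with c = (α + βΓ*)Γ_I.) -/

import Mathlib

noncomputable section

/-- The quadratic form `Q(v) = -∑ v μ ^ 2` on `ℂⁿ`. -/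
def Qf (n : ℕ) : QuadraticForm ℂ (Fin n → ℂ) :=
  QuadraticMap.weightedSumSquares ℂ (fun _ : Fin n => (-1 : ℂ))

/-- The Clifford algebra of `Qf n`. -/
abbrev Cl (n : ℕ) := CliffordAlgebra (Qf n)

/-- The canonical embedding `ℂⁿ → Cℓ`. -/
def emb (n : ℕ) : (Fin n → ℂ) →ₗ[ℂ] Cl n := CliffordAlgebra.ι (Qf n)

/-- `Γ_μ = ι(e_μ)`. -/
def Γg (n : ℕ) (μ : Fin n) : Cl n := emb n (Pi.single μ 1)

/-- `Γ_I = Γ_{i₁} ⋯ Γ_{i_k}` with `i₁ < ⋯ < i_k` the elements of `I`. -/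
def ΓI (n : ℕ) (I : Finset (Fin n)) : Cl n :=
  ((I.sort (· ≤ ·)).map (Γg n)).prod

/-- `q_{a,b}(x) = a²x + xb² − 2axb`. -/
def qp {n : ℕ} (a b x : Cl n) : Cl n := a ^ 2 * x + x * b ^ 2 - 2 * a * x * b

/-- `s_{a,b}(x) = ax − xb`. -/
def sp {n : ℕ} (a b x : Cl n) : Cl n := a * x - x * b

/-- `σ_k = (−1)^{k(k+1)/2}`. -/
def σs (k : ℕ) : ℂ := (-1 : ℂ) ^ (k * (k + 1) / 2)

lemma Γg_sq (n : ℕ) (μ : Fin n) : Γg n μ * Γg n μ = -1 := by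
  rw [Γg, emb, CliffordAlgebra.ι_sq_scalar]
  have h : Qf n (Pi.single μ 1) = -1 := by
    simp [Qf, QuadraticMap.weightedSumSquares_apply, Pi.single_apply]
  rw [h, map_neg, map_one]

lemma Γg_anticomm (n : ℕ) {μ ν : Fin n} (h : μ ≠ ν) :
    Γg n μ * Γg n ν = -(Γg n ν * Γg n μ) := by
  have key := CliffordAlgebra.ι_mul_ι_add_swap (Q := Qf n) (Pi.single μ 1) (Pi.single ν 1)
  have hpolar : QuadraticMap.polar (Qf n) (Pi.single μ 1) (Pi.single ν 1) = 0 := by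
    simp [QuadraticMap.polar, Qf, QuadraticMap.weightedSumSquares_apply, Pi.single_apply,
      Finset.sum_ite_eq, Finset.sum_add_distrib, h, h.symm, mul_ite, ite_mul, add_mul, mul_add]
  rw [hpolar, map_zero] at key
  rw [Γg, Γg, emb]
  exact eq_neg_of_add_eq_zero_left key

/-- Product of gamma matrices over a list of indices. -/
def P (n : ℕ) (l : List (Fin n)) : Cl n := (l.map (Γg n)).prod

lemma P_nil (n : ℕ) : P n [] = 1 := rfl

lemma P_cons (n : ℕ) (a : Fin n) (l : List (Fin n)) : P n (a :: l) = Γg n a * P n l := by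
  simp [P]

lemma comm_notmem (n : ℕ) (μ : Fin n) :
    ∀ l : List (Fin n), μ ∉ l → P n l * Γg n μ = ((-1 : ℂ) ^ l.length) • (Γg n μ * P n l)
  | [], _ => by simp [P_nil]
  | a :: l, hmem => by
    have ha : a ≠ μ := fun h => hmem (h ▸ (List.mem_cons_self : a ∈ a :: l))
    have hl : μ ∉ l := fun h => hmem (List.mem_cons_of_mem a h)
    rw [P_cons, mul_assoc, comm_notmem n μ l hl, mul_smul_comm, ← mul_assoc,
      Γg_anticomm n ha, List.length_cons, pow_succ]
    simp [mul_smul_comm, smul_smul, neg_mul, mul_comm, mul_assoc]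

lemma comm_notmem' (n : ℕ) (μ : Fin n) (l : List (Fin n)) (h : μ ∉ l) :
    Γg n μ * P n l = ((-1 : ℂ) ^ l.length) • (P n l * Γg n μ) := by
  rw [comm_notmem n μ l h, smul_smul, ← pow_add, Even.neg_one_pow ⟨l.length, rfl⟩, one_smul]

lemma comm_mem (n : ℕ) (μ : Fin n) :
    ∀ l : List (Fin n), l.Nodup → μ ∈ l →
      P n l * Γg n μ = ((-1 : ℂ) ^ (l.length + 1)) • (Γg n μ * P n l)
  | [], _, hmem => by simp at hmem
  | a :: l, hnd, hmem => by
    rcases List.mem_cons.mp hmem with h | h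
    · subst h
      have hl : μ ∉ l := (List.nodup_cons.mp hnd).1
      rw [P_cons, mul_assoc, comm_notmem n μ l hl, mul_smul_comm, ← mul_assoc, Γg_sq,
        List.length_cons]
      simp [smul_smul, pow_succ, mul_comm, neg_mul, mul_assoc]
    · have ha : a ≠ μ := fun he => (List.nodup_cons.mp hnd).1 (he ▸ h)
      rw [P_cons, mul_assoc, comm_mem n μ l (List.nodup_cons.mp hnd).2 h, mul_smul_comm,
        ← mul_assoc, Γg_anticomm n ha, List.length_cons]
      simp [mul_smul_comm, smul_smul, pow_succ, neg_mul, mul_comm, mul_assoc]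

lemma σs_succ (k : ℕ) : σs (k + 1) = (-1 : ℂ) ^ (k + 1) * σs k := by
  rw [σs, σs, ← pow_add]
  congr 1
  have h : (k+1)*(k+1+1) = k*(k+1) + 2*(k+1) := by ring
  rw [h, Nat.add_mul_div_left _ _ (by norm_num : (0:ℕ) < 2)]
  omega

lemma P_sq (n : ℕ) :
    ∀ l : List (Fin n), l.Nodup → P n l * P n l = σs l.length • 1
  | [], _ => by simp [P_nil, σs]
  | a :: l, hnd => by
    have hl : a ∉ l := (List.nodup_cons.mp hnd).1
    rw [P_cons, mul_assoc, ← mul_assoc (P n l), comm_notmem n a l hl, smul_mul_assoc,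
      mul_smul_comm, ← mul_assoc, ← mul_assoc, Γg_sq, mul_assoc,
      P_sq n l (List.nodup_cons.mp hnd).2, List.length_cons, σs_succ, pow_succ]
    simp [smul_smul]

lemma P_comm (n : ℕ) (l₂ : List (Fin n)) :
    ∀ l₁ : List (Fin n), (∀ μ ∈ l₁, μ ∉ l₂) →
      P n l₁ * P n l₂ = ((-1 : ℂ) ^ (l₁.length * l₂.length)) • (P n l₂ * P n l₁)
  | [], _ => by simp [P_nil]
  | a :: l₁, hdisj => by
    have ha : a ∉ l₂ := hdisj a (List.mem_cons_self : a ∈ a :: l₁)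
    have hrest : ∀ μ ∈ l₁, μ ∉ l₂ := fun μ hμ => hdisj μ (List.mem_cons_of_mem a hμ)
    rw [P_cons, mul_assoc, P_comm n l₂ l₁ hrest, mul_smul_comm, ← mul_assoc,
      comm_notmem' n a l₂ ha, smul_mul_assoc, smul_smul, ← pow_add, List.length_cons,
      mul_assoc (P n l₂)]
    congr 2
    ring

lemma key {A : Type*} [Ring A] [Algebra ℂ A] (p q g c : A) (sI sJ α β : ℂ)
    (hc : c = α • p + β • q)
    (hp2 : p * p = sI • 1) (hq2 : q * q = sJ • 1) (hpq : q * p = p * q)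
    (hpg : p * g = -(g * p)) (hqg : q * g = g * q) :
    c ^ 2 * g + g * c ^ 2 + 2 * c * g * c = (4 * sJ * β ^ 2) • g := by
  have hpqg : p * q * g = -(g * (p * q)) := by
    rw [mul_assoc, hqg, ← mul_assoc, hpg]
    simp [neg_mul, mul_assoc]
  have hcc : c * c = (α ^ 2 * sI + β ^ 2 * sJ) • (1 : A) + (2 * α * β) • (p * q) := by
    rw [hc]
    simp only [add_mul, mul_add, smul_mul_assoc, mul_smul_comm, smul_smul, hp2, hq2, hpq]
    module
  have hcg : c * g = g * ((-α) • p + β • q) := by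
    rw [hc]
    simp only [add_mul, mul_add, smul_mul_assoc, mul_smul_comm, hpg, hqg]
    module
  have hc2 : ((-α) • p + β • q) * c = (β ^ 2 * sJ - α ^ 2 * sI) • (1 : A) := by
    rw [hc]
    simp only [add_mul, mul_add, smul_mul_assoc, mul_smul_comm, smul_smul, hp2, hq2, hpq]
    module
  have hfin : 2 * c * g * c = 2 * (c * g * c) := by noncomm_ring
  rw [pow_two, hfin, hcg, mul_assoc g, hc2, hcc]
  simp only [add_mul, mul_add, smul_mul_assoc, mul_smul_comm, hpqg, one_mul, mul_one, two_mul]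
  module

lemma ΓI_eq_P (n : ℕ) (I : Finset (Fin n)) : ΓI n I = P n (I.sort (· ≤ ·)) := rfl

/-- eigenvalue formula for pseudo-monomial quadratic Clifford pairs of
even type with opposite signs. -/
theorem stmt_17 (n : ℕ) (hn : 1 ≤ n) (I : Finset (Fin n)) (J : Finset (Fin n))
    (hJ : J = Finset.univ \ I) (hIeven : Even I.card) (hJeven : Even J.card)
    (α β : ℂ) (c d : Cl n)
    (hc : c = α • ΓI n I + β • ΓI n J) (hd : d = -c) (μ : Fin n) :
    (μ ∈ I → qp c d (Γg n μ) = (4 * σs J.card * β ^ 2) • Γg n μ) ∧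
    (μ ∈ J → qp c d (Γg n μ) = (4 * σs I.card * α ^ 2) • Γg n μ) := by
  set lI := I.sort (· ≤ ·) with hlI
  set lJ := J.sort (· ≤ ·) with hlJ
  have hlenI : lI.length = I.card := Finset.length_sort _
  have hlenJ : lJ.length = J.card := Finset.length_sort _
  have hndI : lI.Nodup := I.sort_nodup _
  have hndJ : lJ.Nodup := J.sort_nodup _
  have hmemI : ∀ x : Fin n, x ∈ lI ↔ x ∈ I := fun x => Finset.mem_sort _
  have hmemJ : ∀ x : Fin n, x ∈ lJ ↔ x ∈ J := fun x => Finset.mem_sort _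
  have hIJ : ∀ x : Fin n, x ∈ I ↔ x ∉ J := by
    intro x
    subst hJ
    simp
  set p := ΓI n I with hp
  set q := ΓI n J with hq
  set g := Γg n μ with hg
  have hp2 : p * p = σs I.card • 1 := by
    rw [hp, ΓI_eq_P, ← hlI, P_sq n lI hndI, hlenI]
  have hq2 : q * q = σs J.card • 1 := by
    rw [hq, ΓI_eq_P, ← hlJ, P_sq n lJ hndJ, hlenJ]
  have hdisj : ∀ x ∈ lJ, x ∉ lI := by
    intro x hx
    rw [hmemI]
    intro hxI
    exact (hIJ x).mp hxI ((hmemJ x).mp hx)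
  have hpq : q * p = p * q := by
    rw [hq, hp, ΓI_eq_P, ΓI_eq_P, ← hlI, ← hlJ, P_comm n lI lJ hdisj, hlenI, hlenJ]
    rw [Even.neg_one_pow (hJeven.mul_right _), one_smul]
  -- the qp reduction
  have hqp : qp c d g = c ^ 2 * g + g * c ^ 2 + 2 * c * g * c := by
    rw [qp, hd]
    noncomm_ring
  constructor
  · intro hμI
    have hpg : p * g = -(g * p) := by
      rw [hp, hg, ΓI_eq_P, ← hlI, comm_mem n μ lI hndI ((hmemI μ).mpr hμI), hlenI,
        Odd.neg_one_pow (by exact hIeven.add_one), neg_one_smul]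
    have hqg : q * g = g * q := by
      rw [hq, hg, ΓI_eq_P, ← hlJ,
        comm_notmem n μ lJ (fun h => (hIJ μ).mp hμI ((hmemJ μ).mp h)), hlenJ,
        Even.neg_one_pow hJeven, one_smul]
    rw [hqp]
    exact key p q g c (σs I.card) (σs J.card) α β hc hp2 hq2 hpq hpg hqg
  · intro hμJ
    have hμI : μ ∉ I := fun h => (hIJ μ).mp h hμJ
    have hqg : q * g = -(g * q) := by
      rw [hq, hg, ΓI_eq_P, ← hlJ, comm_mem n μ lJ hndJ ((hmemJ μ).mpr hμJ), hlenJ,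
        Odd.neg_one_pow (by exact hJeven.add_one), neg_one_smul]
    have hpg : p * g = g * p := by
      rw [hp, hg, ΓI_eq_P, ← hlI, comm_notmem n μ lI (fun h => hμI ((hmemI μ).mp h)), hlenI,
        Even.neg_one_pow hIeven, one_smul]
    rw [hqp]
    have hc' : c = β • q + α • p := by rw [hc, add_comm]
    exact key q p g c (σs J.card) (σs I.card) β α hc' hq2 hp2 hpq.symm hqg hpg
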